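/- Under the setting of the OEF proximal Newton step: f has L_g-Lipschitz gradient, ‖g_k − ∇f(x_k)‖ ≤ δ_k·‖G̃(x_k)‖ with G̃(x_k) = x_k − prox_h(x_k − g_k), H_k ⪰ c_k·I symmetric, φ_k(x) = f(x_k) + ⟨g_k, x − x_k⟩ + ½⟨x − x_k, H_k(x − x_k)⟩ + h(x), and x_{k+1} satisfies the inexactness condition with some ξ_k ∈ ∂φ_k(x_{k+1}), ‖ξ_k‖ ≤ (η_k/2)‖x_{k+1} − x_k‖. Then φ(x_k) ≥ φ(x_{k+1}) + ½(c_k − L_g − η_k − 2δ_k(1 + η_k/2 + ‖H_k‖))·‖x_k − x_{k+1}‖², where φ = f + h. -/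

import Mathlib

/-!
Write `s = x_{k+1} - x_k`. Testing the inexactness condition at `x_k` and bounding `f(x_{k+1})` by
the descent lemma leaves everything in place except the gradient error `⟪g_k - ∇f(x_k), s⟫`. To
control it, note that `ξ_k - g_k - H_k s` is a subgradient of `h` at `x_{k+1}` (the quadratic part
of `φ_k` is smooth), while the prox characterisation makes `x_k - g_k - p` one at
`p = prox_h(x_k - g_k)`. Monotonicity of `∂h` turns these into `⟪G + c, G + s⟫ ≤ 0` for
`G = x_k - p` and `c = H_k s - ξ_k`, whence `‖G‖ ≤ ‖c‖ + ‖s‖ ≤ (1 + η_k/2 + ‖H_k‖)‖s‖`.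
-/

open scoped RealInnerProductSpace
open Filter Set Topology

section

variable {E : Type*} [NormedAddCommGroup E] [InnerProductSpace ℝ E]

def HasSubgradientAt (h : E → ℝ) (v x : E) : Prop := ∀ z, h x + ⟪v, z - x⟫ ≤ h z

theorem HasSubgradientAt.inner_sub_nonneg {h : E → ℝ} {u v x y : E}
    (hx : HasSubgradientAt h u x) (hy : HasSubgradientAt h v y) : 0 ≤ ⟪u - v, x - y⟫ := by
  have hxy := hx y
  have hyx := hy x
  simp only [inner_sub_left, inner_sub_right] at *
  linarith

theorem ConvexOn.hasSubgradientAt_sub_gradient [CompleteSpace E] {h q : E → ℝ}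
    (hh : ConvexOn ℝ univ h) {q' ξ x : E} (hq : HasGradientAt q q' x)
    (hξ : HasSubgradientAt (fun z => q z + h z) ξ x) :
    HasSubgradientAt h (ξ - q') x := by
  intro z
  set w := z - x
  -- Along `x + t • w`, convexity bounds the slope of `h` by `h z - h x`, so the slope of `q` is
  -- at least `⟪ξ, w⟫ - (h z - h x)`; as `t → 0⁺` it tends to `⟪q', w⟫`.
  have hline : HasDerivAt (fun t : ℝ => q (x + t • w)) ⟪q', w⟫ 0 := by
    have := hq.hasFDerivAt.comp_hasDerivAt_of_eq (0 : ℝ)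
      (((hasDerivAt_id (0 : ℝ)).smul_const w).const_add x) (by simp)
    simp only [InnerProductSpace.toDual_apply_apply, id, one_smul] at this
    exact this
  have hbound : ∀ᶠ t in 𝓝[>] (0 : ℝ),
      ⟪ξ, w⟫ - (h z - h x) ≤ t⁻¹ • (q (x + (0 + t) • w) - q (x + (0 : ℝ) • w)) := by
    filter_upwards [Ioo_mem_nhdsGT one_pos] with t ⟨ht0, ht1⟩
    have hconv : h (x + t • w) ≤ h x + t * (h z - h x) := by
      have := hh.2 (mem_univ x) (mem_univ z) (sub_nonneg.2 ht1.le) ht0.le (sub_add_cancel 1 t)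
      rw [show (1 - t) • x + t • z = x + t • w by simp only [w]; module, smul_eq_mul,
        smul_eq_mul] at this
      linarith
    have hsub := hξ (x + t • w)
    rw [add_sub_cancel_left, inner_smul_right] at hsub
    have : ⟪ξ, w⟫ - (h z - h x) ≤ t⁻¹ * (q (x + t • w) - q x) :=
      (le_inv_mul_iff₀ ht0).2 (by linarith)
    simpa only [zero_add, zero_smul, add_zero, smul_eq_mul] using this
  have := ge_of_tendsto hline.tendsto_slope_zero_right hbound
  rw [inner_sub_left]
  linarith

theorem hasGradientAt_quadratic [CompleteSpace E] {H : E →L[ℝ] E}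
    (hH : ∀ u v, ⟪H u, v⟫ = ⟪u, H v⟫) (c : ℝ) (g a x : E) :
    HasGradientAt (fun z => c + ⟪g, z - a⟫ + 1 / 2 * ⟪z - a, H (z - a)⟫) (g + H (x - a)) x := by
  rw [hasGradientAt_iff_hasFDerivAt]
  have hd : HasFDerivAt (fun z => z - a) (ContinuousLinearMap.id ℝ E) x :=
    (hasFDerivAt_id x).sub_const a
  refine (((hasFDerivAt_const c x).add ((hasFDerivAt_const g x).inner ℝ hd)).add
    ((hd.inner ℝ (H.hasFDerivAt.comp x hd)).const_mul (1 / 2))).congr_fderiv ?_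
  ext v
  have hsym := hH (x - a) v
  simp only [zero_add, one_div, Function.comp_apply, ContinuousLinearMap.comp_id, add_apply,
    ContinuousLinearMap.comp_apply, ContinuousLinearMap.prod_apply, zero_apply,
    ContinuousLinearMap.id_apply, fderivInnerCLM_apply, inner_zero_left, add_zero, smul_apply,
    smul_eq_mul, map_add, InnerProductSpace.toDual_apply_apply, add_right_inj]
  linarith [real_inner_comm v (H (x - a))]

theorem le_add_inner_add_sq_of_lipschitz_gradient [CompleteSpace E] {f : E → ℝ} {f' : E → E}
    {L : ℝ} (hf : ∀ y, HasGradientAt f (f' y) y) (hL : ∀ a b, ‖f' a - f' b‖ ≤ L * ‖a - b‖)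
    (a b : E) : f b ≤ f a + ⟪f' a, b - a⟫ + L / 2 * ‖b - a‖ ^ 2 := by
  set d := b - a
  have hline : ∀ t : ℝ, HasDerivAt (fun s : ℝ => f (a + s • d)) ⟪f' (a + t • d), d⟫ t := by
    intro t
    have := (hf (a + t • d)).hasFDerivAt.comp_hasDerivAt t
      (((hasDerivAt_id t).smul_const d).const_add a)
    simp only [InnerProductSpace.toDual_apply_apply, id, one_smul] at this
    exact this
  have hbound : ∀ t : ℝ, HasDerivAt (fun s : ℝ => f a + s * ⟪f' a, d⟫ + L / 2 * s ^ 2 * ‖d‖ ^ 2)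
      (⟪f' a, d⟫ + L * t * ‖d‖ ^ 2) t := by
    intro t
    refine ((((hasDerivAt_id t).mul_const ⟪f' a, d⟫).const_add (f a)).add
      (((hasDerivAt_pow 2 t).const_mul (L / 2)).mul_const (‖d‖ ^ 2))).congr_deriv ?_
    ring
  have key := image_le_of_deriv_right_le_deriv_boundary (a := 0) (b := 1)
    (fun t _ => (hline t).continuousAt.continuousWithinAt) (fun t _ => (hline t).hasDerivWithinAt)
    (by simp) (fun t _ => (hbound t).continuousAt.continuousWithinAt)
    (fun t _ => (hbound t).hasDerivWithinAt) ?_ (right_mem_Icc.2 zero_le_one)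
  · simpa [d] using key
  · rintro t ⟨ht0, -⟩
    have hlip : ‖f' (a + t • d) - f' a‖ ≤ L * t * ‖d‖ := by
      simpa [norm_smul, abs_of_nonneg ht0, mul_assoc] using hL (a + t • d) a
    calc ⟪f' (a + t • d), d⟫ = ⟪f' a, d⟫ + ⟪f' (a + t • d) - f' a, d⟫ := by
          rw [inner_sub_left]; ring
      _ ≤ ⟪f' a, d⟫ + L * t * ‖d‖ * ‖d‖ := by
          gcongr
          exact (real_inner_le_norm _ _).trans (mul_le_mul_of_nonneg_right hlip (norm_nonneg d))
      _ = ⟪f' a, d⟫ + L * t * ‖d‖ ^ 2 := by ring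

theorem norm_add_le_norm_sub_of_inner_nonpos {u v : E} (h : ⟪u, v⟫ ≤ 0) : ‖u + v‖ ≤ ‖u - v‖ := by
  have hsq : ‖u + v‖ ^ 2 ≤ ‖u - v‖ ^ 2 := by
    rw [norm_add_sq_real, norm_sub_sq_real]
    linarith
  exact (pow_le_pow_iff_left₀ (norm_nonneg _) (norm_nonneg _) two_ne_zero).1 hsq

theorem norm_le_add_of_inner_add_add_nonpos {x a b : E} (h : ⟪x + a, x + b⟫ ≤ 0) :
    ‖x‖ ≤ ‖a‖ + ‖b‖ := by
  have hsum := norm_add_le_norm_sub_of_inner_nonpos h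
  have e1 : (2 : ℝ) • x = (x + a + (x + b)) - (a + b) := by module
  have e2 : x + a - (x + b) = a - b := by abel
  rw [e2] at hsum
  have : 2 * ‖x‖ ≤ ‖a - b‖ + ‖a + b‖ := by
    calc 2 * ‖x‖ = ‖(2 : ℝ) • x‖ := by rw [norm_smul]; norm_num
      _ ≤ ‖x + a + (x + b)‖ + ‖a + b‖ := by rw [e1]; exact norm_sub_le _ _
      _ ≤ ‖a - b‖ + ‖a + b‖ := by gcongr
  linarith [norm_sub_le a b, norm_add_le a b]

theorem neg_mul_sq_le_inner_of_norm_le {u v : E} {c : ℝ} (h : ‖u‖ ≤ c * ‖v‖) :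
    -(c * ‖v‖ ^ 2) ≤ ⟪u, v⟫ := by
  have := mul_le_mul_of_nonneg_right h (norm_nonneg v)
  rw [sq, ← mul_assoc]
  linarith [neg_le_of_abs_le (abs_real_inner_le_norm u v)]

theorem norm_sub_le_of_hasSubgradientAt {h : E → ℝ} {x g p y ξ v : E}
    (hp : HasSubgradientAt h (x - g - p) p) (hy : HasSubgradientAt h (ξ - g - v) y) :
    ‖x - p‖ ≤ ‖v - ξ‖ + ‖y - x‖ := by
  have hmono := hp.inner_sub_nonneg hy
  have e1 : x - g - p - (ξ - g - v) = x - p + (v - ξ) := by abel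
  have e2 : p - y = -(x - p + (y - x)) := by abel
  rw [e1, e2, inner_neg_right] at hmono
  exact norm_le_add_of_inner_add_add_nonpos (by linarith)

end

theorem stmt2_general {n : ℕ}
    (f : EuclideanSpace ℝ (Fin n) → ℝ)
    (f' : EuclideanSpace ℝ (Fin n) → EuclideanSpace ℝ (Fin n))
    (hdiff : ∀ y, HasGradientAt f (f' y) y)
    (Lg : ℝ)
    (hLip : ∀ a b, ‖f' a - f' b‖ ≤ Lg * ‖a - b‖)
    (h : EuclideanSpace ℝ (Fin n) → ℝ) (hconv : ConvexOn ℝ Set.univ h)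
    (prox : EuclideanSpace ℝ (Fin n) → EuclideanSpace ℝ (Fin n))
    (hprox : ∀ u p, p = prox u ↔ ∀ z, h p + ⟪u - p, z - p⟫ ≤ h z)
    (gk xk x1 ξk : EuclideanSpace ℝ (Fin n))
    (δk ηk ck : ℝ) (hδ0 : 0 ≤ δk)
    (Hk : EuclideanSpace ℝ (Fin n) →L[ℝ] EuclideanSpace ℝ (Fin n))
    (hsym : ∀ u v, ⟪Hk u, v⟫ = ⟪u, Hk v⟫)
    (hpd : ∀ v, ck * ‖v‖ ^ 2 ≤ ⟪v, Hk v⟫)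
    -- inexact gradient: ‖gₖ − ∇f(xₖ)‖ ≤ δₖ ‖G̃(xₖ)‖
    (hg : ‖gk - f' xk‖ ≤ δk * ‖xk - prox (xk - gk)‖)
    (φk : EuclideanSpace ℝ (Fin n) → ℝ)
    (hφk : ∀ z, φk z =
      f xk + ⟪gk, z - xk⟫ + (1 / 2) * ⟪z - xk, Hk (z - xk)⟫ + h z)
    (hξ : ∀ z, φk x1 + ⟪ξk, z - x1⟫ ≤ φk z)
    (hξn : ‖ξk‖ ≤ ηk / 2 * ‖x1 - xk‖) :
    f xk + h xk ≥ f x1 + h x1 +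
      (1 / 2) * (ck - Lg - ηk - 2 * δk * (1 + ηk / 2 + ‖Hk‖)) * ‖xk - x1‖ ^ 2 := by
  have hsub : HasSubgradientAt h (ξk - gk - Hk (x1 - xk)) x1 := by
    rw [sub_sub]
    refine hconv.hasSubgradientAt_sub_gradient (hasGradientAt_quadratic hsym (f xk) gk xk x1) ?_
    simpa only [HasSubgradientAt, hφk] using hξ
  have hres : ‖xk - prox (xk - gk)‖ ≤ (1 + ηk / 2 + ‖Hk‖) * ‖x1 - xk‖ := by
    have := norm_sub_le_of_hasSubgradientAt ((hprox (xk - gk) _).1 rfl) hsub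
    linarith [norm_sub_le (Hk (x1 - xk)) ξk, Hk.le_opNorm (x1 - xk)]
  have hgrad : -(δk * (1 + ηk / 2 + ‖Hk‖) * ‖x1 - xk‖ ^ 2) ≤ ⟪gk - f' xk, x1 - xk⟫ :=
    neg_mul_sq_le_inner_of_norm_le <|
      (hg.trans (mul_le_mul_of_nonneg_left hres hδ0)).trans_eq (mul_assoc _ _ _).symm
  have hsubgrad : -(ηk / 2 * ‖xk - x1‖ ^ 2) ≤ ⟪ξk, xk - x1⟫ :=
    neg_mul_sq_le_inner_of_norm_le (by rwa [norm_sub_rev] at hξn)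
  have hmodel := hξ xk
  simp only [hφk, sub_self, inner_zero_right, map_zero, mul_zero, add_zero] at hmodel
  rw [inner_sub_left] at hgrad
  rw [norm_sub_rev xk x1] at hsubgrad ⊢
  linarith [le_add_inner_add_sq_of_lipschitz_gradient hdiff hLip xk x1, hpd (x1 - xk)]

/-- sufficient decrease of the OEF proximal Newton step:
`φ(xₖ) ≥ φ(x_{k+1}) + ½(cₖ − L_g − ηₖ − 2δₖ(1 + ηₖ/2 + ‖Hₖ‖))‖xₖ − x_{k+1}‖²`
for `φ = f + h`. -/
theorem stmt2 {n : ℕ}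
    (f : EuclideanSpace ℝ (Fin n) → ℝ)
    (f' : EuclideanSpace ℝ (Fin n) → EuclideanSpace ℝ (Fin n))
    (hdiff : ∀ y, HasGradientAt f (f' y) y)
    (Lg : ℝ) (hLg : 0 < Lg)
    (hLip : ∀ a b, ‖f' a - f' b‖ ≤ Lg * ‖a - b‖)
    (h : EuclideanSpace ℝ (Fin n) → ℝ) (hconv : ConvexOn ℝ Set.univ h)
    (prox : EuclideanSpace ℝ (Fin n) → EuclideanSpace ℝ (Fin n))
    (hprox : ∀ u p, p = prox u ↔ ∀ z, h p + ⟪u - p, z - p⟫ ≤ h z)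
    (gk xk x1 ξk : EuclideanSpace ℝ (Fin n))
    (δk ηk ck : ℝ) (hδ0 : 0 ≤ δk) (hδ1 : δk < 1 / 2)
    (hη0 : 0 ≤ ηk) (hη1 : ηk < 1) (hck : 0 < ck)
    (Hk : EuclideanSpace ℝ (Fin n) →L[ℝ] EuclideanSpace ℝ (Fin n))
    (hsym : ∀ u v, ⟪Hk u, v⟫ = ⟪u, Hk v⟫)
    (hpd : ∀ v, ck * ‖v‖ ^ 2 ≤ ⟪v, Hk v⟫)
    -- inexact gradient: ‖gₖ − ∇f(xₖ)‖ ≤ δₖ ‖G̃(xₖ)‖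
    (hg : ‖gk - f' xk‖ ≤ δk * ‖xk - prox (xk - gk)‖)
    (φk : EuclideanSpace ℝ (Fin n) → ℝ)
    (hφk : ∀ z, φk z =
      f xk + ⟪gk, z - xk⟫ + (1 / 2) * ⟪z - xk, Hk (z - xk)⟫ + h z)
    (hξ : ∀ z, φk x1 + ⟪ξk, z - x1⟫ ≤ φk z)
    (hξn : ‖ξk‖ ≤ ηk / 2 * ‖x1 - xk‖) :
    f xk + h xk ≥ f x1 + h x1 +
      (1 / 2) * (ck - Lg - ηk - 2 * δk * (1 + ηk / 2 + ‖Hk‖)) * ‖xk - x1‖ ^ 2 :=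
  stmt2_general f f' hdiff Lg hLip h hconv prox hprox gk xk x1 ξk δk ηk ck hδ0 Hk hsym hpd hg φk hφk
    hξ hξn
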